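/- For nonnegative integers l, t with 2l ≤ t, the maximum possible number of embeddings of a single longest common subsequence of length l in two sequences of total length t equals C(t−l, l). In particular, max over m+n=t, y ≤ l of C(m−y, l−y)·C(n+y−l, y) = C(t−l, l), using the Vandermonde-type inequality C(r,k)·C(r',k') ≤ C(r+r', k+k'). -/

import Mathlib

/-- `C` is a longest common subsequence of `A` and `B`. -/
def IsLCS {α : Type*} (A B C : List α) : Prop :=
  C.Sublist A ∧ C.Sublist B ∧ ∀ D : List α, D.Sublist A → D.Sublist B → D.length ≤ C.length

/-- The number of embeddings of the string `C` as a common subsequence of `A` and `B`: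
pairs of strictly increasing position sequences matching the characters of `C`. -/
noncomputable def EmbCount {α : Type*} (A B C : List α) : ℕ :=
  Nat.card {pq : (Fin C.length → Fin A.length) × (Fin C.length → Fin B.length) //
    StrictMono pq.1 ∧ StrictMono pq.2 ∧
      ∀ i, A.get (pq.1 i) = C.get i ∧ B.get (pq.2 i) = C.get i}

/-!
Encode an embedding `(p, q)` of `C` (with `|C| = l`) by the positions `p i + q i - i`: they are
strictly increasing and lie below `|A| + |B| - l`, so they form an `l`-subset of a set of size
`t - l`. For an LCS the encoding is injective. If two embeddings `(p, q)`, `(p', q')` have the same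
code but `p i < p' i`, then `q' i < q i`, and the positions `p 0, …, p i, p' i, …, p' (l - 1)` in
`A` together with `q' 0, …, q' i, q i, …, q (l - 1)` in `B` embed a common subsequence of length
`l + 1`. The bound is attained by `A = C = aˡ`, `B = aᵗ⁻ˡ`, and the identity for the maximum is
the single-term case of Vandermonde's identity.
-/

theorem Fin.card_strictMono (k n : ℕ) :
    Nat.card {f : Fin k → Fin n // StrictMono f} = n.choose k := by
  let e : {f : Fin k → Fin n // StrictMono f} ≃ (Fin k ↪o Fin n) :=
    { toFun := fun f => OrderEmbedding.ofStrictMono f.1 f.2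
      invFun := fun e => ⟨e, e.strictMono⟩
      left_inv := fun _ => rfl
      right_inv := fun _ => rfl }
  rw [Nat.card_congr (e.trans Set.powersetCard.ofFinEmbEquiv), Set.powersetCard.card,
    Nat.card_eq_fintype_card, Fintype.card_fin]

theorem StrictMono.val_add_sub_le {k n : ℕ} {f : Fin k → Fin n} (hf : StrictMono f)
    {a b : Fin k} (hab : a ≤ b) : (f a : ℕ) + (b - a) ≤ f b := by
  have hcard := Finset.card_le_card_of_injOn f (s := Finset.Icc a b) (t := Finset.Icc (f a) (f b))
    (fun x hx => by
      rw [Finset.coe_Icc, Set.mem_Icc] at hx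
      exact Finset.mem_Icc.2 ⟨hf.monotone hx.1, hf.monotone hx.2⟩) hf.injective.injOn
  rw [Fin.card_Icc, Fin.card_Icc] at hcard
  omega

theorem StrictMono.val_le {k n : ℕ} {f : Fin k → Fin n} (hf : StrictMono f) (i : Fin k) :
    (i : ℕ) ≤ f i := by
  have := hf.val_add_sub_le (show (⟨0, i.pos⟩ : Fin k) ≤ i from Nat.zero_le _)
  simp only at this
  omega

theorem List.ofFn_sublist_of_strictMono {α : Type*} (L : List α) {k : ℕ}
    {f : Fin k → Fin L.length} (hf : StrictMono f) {g : Fin k → α}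
    (hg : ∀ j, L.get (f j) = g j) : (List.ofFn g).Sublist L := by
  rw [List.sublist_iff_exists_fin_orderEmbedding_get_eq]
  refine ⟨OrderEmbedding.ofStrictMono (f ∘ Fin.cast List.length_ofFn)
    (hf.comp fun _ _ h => h), fun j => ?_⟩
  simp only [List.get_ofFn, OrderEmbedding.coe_ofStrictMono, Function.comp_apply]
  exact (hg _).symm

section Splice

variable {l : ℕ}

def spliceIndex (i : Fin l) (j : Fin (l + 1)) : Fin l :=
  if h : (j : ℕ) ≤ i then ⟨j, h.trans_lt i.2⟩ else ⟨j - 1, by have := j.2; omega⟩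

def splice {β : Type*} (p p' : Fin l → β) (i : Fin l) (j : Fin (l + 1)) : β :=
  if (j : ℕ) ≤ i then p (spliceIndex i j) else p' (spliceIndex i j)

theorem strictMono_splice {β : Type*} [Preorder β] {p p' : Fin l → β} (hp : StrictMono p)
    (hp' : StrictMono p') {i : Fin l} (h : p i < p' i) : StrictMono (splice p p' i) := by
  intro a b hab
  rw [Fin.lt_def] at hab
  simp only [splice, spliceIndex]
  split_ifs with ha hb hb
  · exact hp (Fin.mk_lt_mk.2 hab)
  · calc p ⟨a, _⟩ ≤ p i := hp.monotone (Fin.mk_le_of_le_val ha)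
      _ < p' i := h
      _ ≤ p' ⟨b - 1, _⟩ := hp'.monotone (Fin.le_def.2 (by dsimp only; omega))
  · omega
  · exact hp' (Fin.mk_lt_mk.2 (by omega))

end Splice

section LCS

variable {α : Type*}

def IsSubseqEmbedding (C L : List α) (p : Fin C.length → Fin L.length) : Prop :=
  StrictMono p ∧ ∀ i, L.get (p i) = C.get i

theorem IsSubseqEmbedding.get_splice {C L : List α} {p p' : Fin C.length → Fin L.length}
    (hp : IsSubseqEmbedding C L p) (hp' : IsSubseqEmbedding C L p') (i : Fin C.length)
    (j : Fin (C.length + 1)) : L.get (splice p p' i j) = C.get (spliceIndex i j) := by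
  unfold splice
  split_ifs
  exacts [hp.2 _, hp'.2 _]

theorem IsLCS.snd_le_of_fst_lt {A B C : List α} (hlcs : IsLCS A B C)
    {p p' : Fin C.length → Fin A.length} {q q' : Fin C.length → Fin B.length}
    (hp : IsSubseqEmbedding C A p) (hp' : IsSubseqEmbedding C A p')
    (hq : IsSubseqEmbedding C B q) (hq' : IsSubseqEmbedding C B q')
    {i : Fin C.length} (h : p i < p' i) : q i ≤ q' i := by
  by_contra! h'
  have hlen := hlcs.2.2 (List.ofFn (C.get ∘ spliceIndex i))
    (A.ofFn_sublist_of_strictMono (strictMono_splice hp.1 hp'.1 h) (hp.get_splice hp' i))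
    (B.ofFn_sublist_of_strictMono (strictMono_splice hq'.1 hq.1 h') (hq'.get_splice hq i))
  simp at hlen

theorem IsLCS.fst_eq_of_add_eq {A B C : List α} (hlcs : IsLCS A B C)
    {p p' : Fin C.length → Fin A.length} {q q' : Fin C.length → Fin B.length}
    (hp : IsSubseqEmbedding C A p) (hp' : IsSubseqEmbedding C A p')
    (hq : IsSubseqEmbedding C B q) (hq' : IsSubseqEmbedding C B q')
    {i : Fin C.length} (hsum : (p i : ℕ) + q i = p' i + q' i) : p i = p' i := by
  refine le_antisymm (not_lt.1 fun hlt => ?_) (not_lt.1 fun hlt => ?_)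
  · have := hlcs.snd_le_of_fst_lt hp' hp hq' hq hlt
    rw [Fin.lt_def] at hlt
    rw [Fin.le_def] at this
    omega
  · have := hlcs.snd_le_of_fst_lt hp hp' hq hq' hlt
    rw [Fin.lt_def] at hlt
    rw [Fin.le_def] at this
    omega

end LCS

section Encoding

variable {l m n : ℕ} {p : Fin l → Fin m} {q : Fin l → Fin n}

theorem val_add_val_sub_lt_of_strictMono (hp : StrictMono p) (hq : StrictMono q) (i : Fin l) :
    (p i : ℕ) + q i - i < m + n - l := by
  have hi := i.2
  have hlast : i ≤ ⟨l - 1, by omega⟩ := Fin.le_def.2 (by dsimp only; omega)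
  have hpl := hp.val_add_sub_le hlast
  have hql := hq.val_add_sub_le hlast
  dsimp only at hpl hql
  have := hp.val_le i
  have := hq.val_le i
  omega

theorem strictMono_val_add_val_sub (hp : StrictMono p) (hq : StrictMono q) :
    StrictMono fun i => (⟨(p i : ℕ) + q i - i, val_add_val_sub_lt_of_strictMono hp hq i⟩ : Fin (m + n - l)) := by
  intro i j hij
  have := hp.val_add_sub_le hij.le
  have := hq.val_add_sub_le hij.le
  have := hp.val_le i
  have := hq.val_le i
  rw [Fin.lt_def] at hij
  exact Fin.mk_lt_mk.2 (by omega)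

end Encoding

section EmbCount

variable {α : Type*}

theorem embCount_le_choose {A B C : List α} (hlcs : IsLCS A B C) :
    EmbCount A B C ≤ (A.length + B.length - C.length).choose C.length := by
  rw [← Fin.card_strictMono, EmbCount]
  refine Nat.card_le_card_of_injective (fun x => ⟨_, strictMono_val_add_val_sub x.2.1 x.2.2.1⟩) ?_
  rintro ⟨⟨p, q⟩, hp, hq, hpq⟩ ⟨⟨p', q'⟩, hp', hq', hpq'⟩ hcode
  dsimp only at hp hq hpq hp' hq' hpq' hcode
  have hpA : IsSubseqEmbedding C A p := ⟨hp, fun i => (hpq i).1⟩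
  have hqB : IsSubseqEmbedding C B q := ⟨hq, fun i => (hpq i).2⟩
  have hp'A : IsSubseqEmbedding C A p' := ⟨hp', fun i => (hpq' i).1⟩
  have hq'B : IsSubseqEmbedding C B q' := ⟨hq', fun i => (hpq' i).2⟩
  have hsum (i : Fin C.length) : (p i : ℕ) + q i = p' i + q' i := by
    have hcode_i := Fin.mk.inj_iff.1 (congrFun (Subtype.ext_iff.1 hcode) i)
    have := hp.val_le i
    have := hq.val_le i
    have := hp'.val_le i
    have := hq'.val_le i
    omega
  have hpp' : p = p' := funext fun i => hlcs.fst_eq_of_add_eq hpA hp'A hqB hq'B (hsum i)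
  have hqq' : q = q' := funext fun i => Fin.ext (by have := hsum i; rw [hpp'] at this; omega)
  subst hpp' hqq'
  rfl

theorem isLCS_of_sublist {A B : List α} (h : A.Sublist B) : IsLCS A B A :=
  ⟨List.Sublist.refl A, h, fun _ hD _ => hD.length_le⟩

theorem embCount_replicate (a : α) (m n l : ℕ) :
    EmbCount (List.replicate m a) (List.replicate n a) (List.replicate l a) =
      m.choose l * n.choose l := by
  rw [EmbCount, Nat.card_congr ((Equiv.subtypeEquivRight
      (q := fun pq => StrictMono pq.1 ∧ StrictMono pq.2) fun _ => by simp).trans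
    Equiv.subtypeProdEquivProd), Nat.card_prod, Fin.card_strictMono, Fin.card_strictMono,
    List.length_replicate, List.length_replicate, List.length_replicate]

end EmbCount

theorem Nat.choose_mul_choose_le_choose_add (r k r' k' : ℕ) :
    r.choose k * r'.choose k' ≤ (r + r').choose (k + k') := by
  rw [Nat.add_choose_eq]
  exact Finset.single_le_sum (f := fun ij : ℕ × ℕ => r.choose ij.1 * r'.choose ij.2)
    (fun _ _ => Nat.zero_le _) (Finset.HasAntidiagonal.mem_antidiagonal (a := (k, k')) |>.2 rfl)

theorem sup_choose_mul_choose {t l : ℕ} (h : 2 * l ≤ t) :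
    ((Finset.Icc l (t - l)).sup fun m => (Finset.range (l + 1)).sup fun y =>
        (m - y).choose (l - y) * (t - m + y - l).choose y) = (t - l).choose l := by
  refine le_antisymm (Finset.sup_le fun m hm => Finset.sup_le fun y hy => ?_) ?_
  · rw [Finset.mem_Icc] at hm
    rw [Finset.mem_range] at hy
    calc (m - y).choose (l - y) * (t - m + y - l).choose y
        ≤ (m - y + (t - m + y - l)).choose (l - y + y) :=
          Nat.choose_mul_choose_le_choose_add _ _ _ _
      _ = (t - l).choose l := by congr 1 <;> omega
  · refine Finset.le_sup_of_le (b := l) (Finset.mem_Icc.2 ⟨le_rfl, by omega⟩) ?_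
    refine Finset.le_sup_of_le (b := l) (Finset.self_mem_range_succ l) ?_
    rw [Nat.sub_self, Nat.choose_zero_right, one_mul, Nat.sub_add_cancel (by omega)]

theorem stmt16 (t l : ℕ) (h : 2 * l ≤ t) :
    IsGreatest {e : ℕ | ∃ (α : Type) (A B C : List α),
        A.length + B.length = t ∧ C.length = l ∧ IsLCS A B C ∧ e = EmbCount A B C}
      (Nat.choose (t - l) l) ∧
      ((Finset.Icc l (t - l)).sup fun m => (Finset.range (l + 1)).sup fun y =>
          Nat.choose (m - y) (l - y) * Nat.choose (t - m + y - l) y) = Nat.choose (t - l) l ∧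
      ∀ r k r' k' : ℕ,
        Nat.choose r k * Nat.choose r' k' ≤ Nat.choose (r + r') (k + k') := by
  refine ⟨⟨?_, ?_⟩, sup_choose_mul_choose h, Nat.choose_mul_choose_le_choose_add⟩
  · refine ⟨Unit, List.replicate l (), List.replicate (t - l) (), List.replicate l (),
      by simp only [List.length_replicate]; omega, List.length_replicate,
      isLCS_of_sublist (List.replicate_sublist_replicate _ |>.2 (by omega)), ?_⟩
    rw [embCount_replicate, Nat.choose_self, one_mul]
  · rintro e ⟨α, A, B, C, rfl, rfl, hlcs, rfl⟩
    exact embCount_le_choose hlcs
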